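/- Compression does not increase the absolute values of chromatic coefficients: let G be a finite simple graph on n vertices, let u and v be distinct vertices of G, and let G' = G_{u→v} be the compression of G from u to v. Writing P_G(λ) = Σ_{i=0}^{n} c_i(G) λ^i and P_{G'}(λ) = Σ_{i=0}^{n} c_i(G') λ^i, then |c_i(G')| ≤ |c_i(G)| for all i with 0 ≤ i ≤ n. -/

import Mathlib

open Polynomial

/-- The number of proper colorings of the finite simple graph `G` with `k` colors. -/
def SimpleGraph.numColorings {V : Type*} [Fintype V] [DecidableEq V]
    (G : SimpleGraph V) [DecidableRel G.Adj] (k : ℕ) : ℕ :=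
  Fintype.card {f : V → Fin k // ∀ a b, G.Adj a b → f a ≠ f b}

/-- The compression `G_{u→v}` of the simple graph `G` from vertex `u` to vertex `v`:
for each vertex `x` adjacent to `u` but neither adjacent nor equal to `v`, the edge
`{x, u}` is deleted and the edge `{x, v}` is added. -/
def SimpleGraph.compress {V : Type*} [DecidableEq V] (G : SimpleGraph V) (u v : V) :
    SimpleGraph V where
  Adj x y :=
    (G.Adj x y ∧ ¬(x = u ∧ G.Adj u y ∧ ¬G.Adj v y ∧ y ≠ v) ∧
      ¬(y = u ∧ G.Adj u x ∧ ¬G.Adj v x ∧ x ≠ v)) ∨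
    (x = v ∧ G.Adj u y ∧ ¬G.Adj v y ∧ y ≠ v) ∨
    (y = v ∧ G.Adj u x ∧ ¬G.Adj v x ∧ x ≠ v)
  symm := ⟨fun x y h => by
    rcases h with ⟨h1, h2, h3⟩ | h | h
    · exact Or.inl ⟨h1.symm, h3, h2⟩
    · exact Or.inr (Or.inr h)
    · exact Or.inr (Or.inl h)⟩
  loopless := ⟨fun x => by
    rintro (⟨h, -, -⟩ | ⟨rfl, -, -, h⟩ | ⟨rfl, -, -, h⟩)
    · exact G.loopless.irrefl x h
    · exact h rfl
    · exact h rfl⟩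

instance {V : Type*} [DecidableEq V] (G : SimpleGraph V) [DecidableRel G.Adj] (u v : V) :
    DecidableRel (G.compress u v).Adj := fun x y => by
  dsimp only [SimpleGraph.compress]; infer_instance

/-!
Deletion–contraction, `P(G - ua) = P(G) + P(G / ua)`, shows by induction that the coefficients
of `P_G` alternate in sign, so `|c_i(G)| = (-1)^(n+i) c_i(G)`; these unsigned coefficients are
additive under deletion–contraction and hence monotone under adding edges. If some
`a ∈ N(u) \ N[v]` exists, then `va` is an edge of `G_{u→v}`, with
`G_{u→v} - va = (G - ua)_{u→v}` and `G_{u→v} / va ≤ (G / ua)_{u→v}`, so induction on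
`(|V|, E(G))` bounds `|c_i(G_{u→v})|` by `|c_i(G - ua)| + |c_i(G / ua)| = |c_i(G)|`.
Otherwise the compression does nothing.
-/

namespace SimpleGraph

universe w

variable {V : Type w}

theorem deleteEdges_singleton_lt {G : SimpleGraph V} {u a : V} (h : G.Adj u a) :
    G.deleteEdges {s(u, a)} < G :=
  (deleteEdges_le _).lt_of_ne fun heq => by rw [← heq] at h; simp at h

theorem card_subtype_ne_add_one [Finite V] (a : V) :
    Nat.card {x // x ≠ a} + 1 = Nat.card V := by
  classical
  have := Fintype.ofFinite V
  have := Fintype.card_pos_iff.2 ⟨a⟩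
  simp only [Nat.card_eq_fintype_card, Fintype.card_subtype_compl, Fintype.card_subtype_eq]
  omega

section Contraction

variable [DecidableEq V] {G : SimpleGraph V} {u a : V}

def mergeVertex (hua : u ≠ a) (x : V) : {x // x ≠ a} :=
  if hx : x = a then ⟨u, hua⟩ else ⟨x, hx⟩

theorem mergeVertex_of_ne (hua : u ≠ a) {x : V} (hx : x ≠ a) :
    mergeVertex hua x = ⟨x, hx⟩ :=
  dif_neg hx

theorem mergeVertex_self (hua : u ≠ a) : mergeVertex hua a = ⟨u, hua⟩ := dif_pos rfl

/-- `G / ua`, with the merged vertex named `u`. -/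
def contract (G : SimpleGraph V) (h : G.Adj u a) : SimpleGraph {x // x ≠ a} :=
  G.map (mergeVertex h.ne)

theorem contract_adj (h : G.Adj u a) {x y : {x // x ≠ a}} :
    (G.contract h).Adj x y ↔ x ≠ y ∧
      (G.Adj x y ∨ (x : V) = u ∧ G.Adj a y ∨ (y : V) = u ∧ G.Adj x a) := by
  refine (map_adj' _ _ _ _).trans (and_congr_right fun hxy => ⟨?_, ?_⟩)
  · rintro ⟨x', y', hadj, rfl, rfl⟩
    unfold mergeVertex
    split_ifs with hx hy hy <;> simp_all
  · rintro (hadj | ⟨hx, hadj⟩ | ⟨hy, hadj⟩)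
    · exact ⟨x, y, hadj, mergeVertex_of_ne _ x.2, mergeVertex_of_ne _ y.2⟩
    · exact ⟨a, y, hadj, by rw [mergeVertex_self]; ext; exact hx.symm, mergeVertex_of_ne _ y.2⟩
    · exact ⟨x, a, hadj, mergeVertex_of_ne _ x.2, by rw [mergeVertex_self]; ext; exact hy.symm⟩

variable {α : Type*}

def coloringEquivOfNe (h : G.Adj u a) :
    {C : (G.deleteEdges {s(u, a)}).Coloring α // C u ≠ C a} ≃ G.Coloring α where
  toFun C := Coloring.mk C.1 fun {x y} hxy => by
    by_cases he : s(x, y) = s(u, a)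
    · rcases Sym2.eq_iff.1 he with ⟨rfl, rfl⟩ | ⟨rfl, rfl⟩
      exacts [C.2, C.2.symm]
    · exact C.1.valid ((deleteEdges_adj ..).2 ⟨hxy, he⟩)
  invFun C := ⟨Coloring.mk C fun hxy => C.valid (deleteEdges_le _ hxy), C.valid h⟩
  left_inv _ := rfl
  right_inv _ := rfl

def coloringEquivOfEq (h : G.Adj u a) :
    {C : (G.deleteEdges {s(u, a)}).Coloring α // C u = C a} ≃ (G.contract h).Coloring α where
  toFun C := Coloring.mk (fun x => C.1 x) fun {x y} hxy => by
    obtain ⟨hne, hxy | ⟨hx, hay⟩ | ⟨hy, hxa⟩⟩ := (contract_adj h).1 hxy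
    · exact C.1.valid ((deleteEdges_adj ..).2 ⟨hxy, by simp [x.2, y.2]⟩)
    · have hyu : (y : V) ≠ u := fun hyu => hne (Subtype.ext (hx.trans hyu.symm))
      show C.1 x ≠ C.1 y
      rw [hx, C.2]
      exact C.1.valid ((deleteEdges_adj ..).2 ⟨hay, by simp [y.2, hyu]⟩)
    · have hxu : (x : V) ≠ u := fun hxu => hne (Subtype.ext (hxu.trans hy.symm))
      show C.1 x ≠ C.1 y
      rw [hy, C.2]
      exact C.1.valid ((deleteEdges_adj ..).2 ⟨hxa, by simp [x.2, hxu]⟩)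
  invFun C := ⟨Coloring.mk (C ∘ mergeVertex h.ne) fun {x y} hxy => by
      refine C.valid (map_adj_apply' ((deleteEdges_le _) hxy) ?_)
      obtain ⟨hadj, he⟩ := (deleteEdges_adj ..).1 hxy
      have := hadj.ne
      unfold mergeVertex
      split_ifs <;> simp_all [Sym2.eq_swap, eq_comm],
    congrArg C ((mergeVertex_of_ne h.ne h.ne).trans (mergeVertex_self h.ne).symm)⟩
  left_inv C := by
    refine Subtype.ext (RelHom.ext fun x => ?_)
    by_cases hx : x = a
    · subst hx
      exact (congrArg C.1 (Subtype.ext_iff.1 (mergeVertex_self h.ne))).trans C.2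
    · exact congrArg C.1 (Subtype.ext_iff.1 (mergeVertex_of_ne h.ne hx))
  right_inv C := RelHom.ext fun x => congrArg C (mergeVertex_of_ne h.ne x.2)

theorem card_coloring_deleteEdges [Finite V] [Finite α] (h : G.Adj u a) :
    Nat.card ((G.deleteEdges {s(u, a)}).Coloring α) =
      Nat.card (G.Coloring α) + Nat.card ((G.contract h).Coloring α) := by
  classical
  let e := (Equiv.sumCompl fun C : (G.deleteEdges {s(u, a)}).Coloring α => C u = C a).symm
  rw [Nat.card_congr (e.trans ((coloringEquivOfEq h).sumCongr (coloringEquivOfNe h))),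
    Nat.card_sum, add_comm]

end Contraction

theorem card_coloring_bot [Finite V] (α : Type*) :
    Nat.card ((⊥ : SimpleGraph V).Coloring α) = Nat.card α ^ Nat.card V := by
  rw [← Nat.card_fun]
  exact Nat.card_congr ⟨(⇑), fun f => Coloring.mk f fun h => ((bot_adj _ _).1 h).elim,
    fun _ => rfl, fun _ => rfl⟩

theorem deleteEdges_contract_induction
    {motive : ∀ {V : Type w} [Finite V] [DecidableEq V], SimpleGraph V → Prop}
    (step : ∀ {V : Type w} [Finite V] [DecidableEq V] (G : SimpleGraph V),
      (∀ ⦃u a : V⦄ (h : G.Adj u a),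
        motive (G.deleteEdges {s(u, a)}) ∧ motive (G.contract h)) → motive G)
    {V : Type w} [Finite V] [DecidableEq V] (G : SimpleGraph V) : motive G := by
  induction hn : Nat.card V using Nat.strong_induction_on generalizing V with
  | _ n ih =>
  induction G using WellFoundedLT.induction with
  | _ G ihG =>
  refine step G fun u a h => ⟨ihG _ (deleteEdges_singleton_lt h), ih _ ?_ _ rfl⟩
  rw [← hn, ← card_subtype_ne_add_one a]
  omega

theorem exists_eval_eq_card_coloring [Finite V] (G : SimpleGraph V) :
    ∃ p : ℤ[X], ∀ k : ℕ, p.eval (k : ℤ) = Nat.card (G.Coloring (Fin k)) := by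
  classical
  refine deleteEdges_contract_induction (motive := fun {V} _ _ G =>
    ∃ p : ℤ[X], ∀ k : ℕ, p.eval (k : ℤ) = Nat.card (G.Coloring (Fin k))) ?_ G
  intro V _ _ G ih
  by_cases hG : ∃ u a, G.Adj u a
  · obtain ⟨u, a, h⟩ := hG
    obtain ⟨⟨p, hp⟩, ⟨q, hq⟩⟩ := ih h
    refine ⟨p - q, fun k => ?_⟩
    rw [eval_sub, hp, hq, card_coloring_deleteEdges h]
    push_cast
    ring
  · obtain rfl : G = ⊥ := eq_bot_iff_forall_not_adj.2 fun u a h => hG ⟨u, a, h⟩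
    exact ⟨X ^ Nat.card V, fun k => by simp [card_coloring_bot]⟩

noncomputable def chromaticPolynomial [Finite V] (G : SimpleGraph V) : ℤ[X] :=
  G.exists_eval_eq_card_coloring.choose

section ChromaticPolynomial

variable [Finite V] {G : SimpleGraph V}

theorem eval_chromaticPolynomial (G : SimpleGraph V) (k : ℕ) :
    G.chromaticPolynomial.eval (k : ℤ) = Nat.card (G.Coloring (Fin k)) :=
  G.exists_eval_eq_card_coloring.choose_spec k

theorem chromaticPolynomial_eq_of_eval {p : ℤ[X]}
    (hp : ∀ k : ℕ, p.eval (k : ℤ) = Nat.card (G.Coloring (Fin k))) :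
    G.chromaticPolynomial = p :=
  eq_of_infinite_eval_eq _ _ <| (Set.infinite_range_of_injective Nat.cast_injective).mono <| by
    rintro _ ⟨k, rfl⟩
    simp [eval_chromaticPolynomial, hp]

theorem chromaticPolynomial_deleteEdges [DecidableEq V] {u a : V} (h : G.Adj u a) :
    (G.deleteEdges {s(u, a)}).chromaticPolynomial =
      G.chromaticPolynomial + (G.contract h).chromaticPolynomial :=
  chromaticPolynomial_eq_of_eval fun k => by
    simp [eval_chromaticPolynomial, card_coloring_deleteEdges h]

theorem chromaticPolynomial_bot : (⊥ : SimpleGraph V).chromaticPolynomial = X ^ Nat.card V :=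
  chromaticPolynomial_eq_of_eval fun k => by simp [card_coloring_bot]

noncomputable def unsignedChromaticCoeff (G : SimpleGraph V) (i : ℕ) : ℤ :=
  (-1) ^ (Nat.card V + i) * G.chromaticPolynomial.coeff i

theorem unsignedChromaticCoeff_eq_add [DecidableEq V] {u a : V} (h : G.Adj u a) (i : ℕ) :
    G.unsignedChromaticCoeff i = (G.deleteEdges {s(u, a)}).unsignedChromaticCoeff i +
      (G.contract h).unsignedChromaticCoeff i := by
  simp only [unsignedChromaticCoeff, chromaticPolynomial_deleteEdges h, coeff_add,
    ← card_subtype_ne_add_one a]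
  ring

end ChromaticPolynomial

theorem unsignedChromaticCoeff_nonneg [Finite V] (G : SimpleGraph V) (i : ℕ) :
    0 ≤ G.unsignedChromaticCoeff i := by
  classical
  refine deleteEdges_contract_induction (motive := fun G => 0 ≤ G.unsignedChromaticCoeff i) ?_ G
  intro V _ _ G ih
  by_cases hG : ∃ u a, G.Adj u a
  · obtain ⟨u, a, h⟩ := hG
    rw [unsignedChromaticCoeff_eq_add h]
    exact add_nonneg (ih h).1 (ih h).2
  · obtain rfl : G = ⊥ := eq_bot_iff_forall_not_adj.2 fun u a h => hG ⟨u, a, h⟩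
    rw [unsignedChromaticCoeff, chromaticPolynomial_bot, coeff_X_pow]
    split_ifs with hi
    · simp [hi, ← two_mul]
    · simp

theorem unsignedChromaticCoeff_mono [Finite V] [DecidableEq V] {H G : SimpleGraph V} (hHG : H ≤ G)
    (i : ℕ) : H.unsignedChromaticCoeff i ≤ G.unsignedChromaticCoeff i := by
  induction G using WellFoundedLT.induction with
  | _ G ih =>
  obtain rfl | hlt := hHG.eq_or_lt
  · rfl
  obtain ⟨u, a, hGua, hHua⟩ : ∃ u a, G.Adj u a ∧ ¬H.Adj u a := by
    by_contra! hcon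
    exact hlt.not_ge fun x y hxy => hcon x y hxy
  have hle : H ≤ G.deleteEdges {s(u, a)} := fun x y hxy => by
    refine (deleteEdges_adj ..).2 ⟨hHG hxy, fun he => hHua ?_⟩
    rcases Sym2.eq_iff.1 (Set.mem_singleton_iff.1 he) with ⟨rfl, rfl⟩ | ⟨rfl, rfl⟩
    exacts [hxy, hxy.symm]
  calc H.unsignedChromaticCoeff i ≤ (G.deleteEdges {s(u, a)}).unsignedChromaticCoeff i :=
        ih _ (deleteEdges_singleton_lt hGua) hle
    _ ≤ G.unsignedChromaticCoeff i := by
        rw [unsignedChromaticCoeff_eq_add hGua]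
        linarith [(G.contract hGua).unsignedChromaticCoeff_nonneg i]

theorem abs_coeff_chromaticPolynomial [Finite V] (G : SimpleGraph V) (i : ℕ) :
    |G.chromaticPolynomial.coeff i| = G.unsignedChromaticCoeff i := by
  rw [← abs_of_nonneg (G.unsignedChromaticCoeff_nonneg i), unsignedChromaticCoeff, abs_mul,
    abs_pow, abs_neg, abs_one, one_pow, one_mul]

section Compression

variable [DecidableEq V] {G : SimpleGraph V} {u v a : V}

theorem compress_eq_self (h : ∀ a, G.Adj u a → ¬G.Adj v a → a = v) : G.compress u v = G := by
  ext x y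
  simp only [compress]
  grind

theorem adj_compress_of_adj_of_not_adj (hua : G.Adj u a) (hva : ¬G.Adj v a) (hav : a ≠ v) :
    (G.compress u v).Adj v a :=
  Or.inr (Or.inl ⟨rfl, hua, hva, hav⟩)

theorem deleteEdges_compress (hua : G.Adj u a) (hva : ¬G.Adj v a) (hav : a ≠ v) :
    (G.compress u v).deleteEdges {s(v, a)} = (G.deleteEdges {s(u, a)}).compress u v := by
  have huv : u ≠ v := fun h => hva (h ▸ hua)
  ext x y
  simp only [compress, deleteEdges_adj, Set.mem_singleton_iff, Sym2.eq_iff]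
  have hsymm : ∀ x y, G.Adj x y → G.Adj y x := fun _ _ h => h.symm
  have hirr : ∀ x, ¬G.Adj x x := fun _ => G.irrefl
  grind

theorem contract_compress_le (hua : G.Adj u a) (hva : ¬G.Adj v a) (hav : a ≠ v) :
    (G.compress u v).contract (adj_compress_of_adj_of_not_adj hua hva hav) ≤
      (G.contract hua).compress ⟨u, hua.ne⟩ ⟨v, hav.symm⟩ := by
  intro x y hxy
  rw [contract_adj] at hxy
  simp only [compress, contract_adj, ne_eq, Subtype.ext_iff] at hxy ⊢
  have hsymm : ∀ x y, G.Adj x y → G.Adj y x := fun _ _ h => h.symm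
  have hirr : ∀ x, ¬G.Adj x x := fun _ => G.irrefl
  grind

end Compression

theorem unsignedChromaticCoeff_compress_le [Finite V] [DecidableEq V] (G : SimpleGraph V)
    (u v : V) (i : ℕ) :
    (G.compress u v).unsignedChromaticCoeff i ≤ G.unsignedChromaticCoeff i := by
  refine deleteEdges_contract_induction (motive := fun G => ∀ u v,
    (G.compress u v).unsignedChromaticCoeff i ≤ G.unsignedChromaticCoeff i) ?_ G u v
  intro V _ _ G ih u v
  by_cases hmove : ∃ a, G.Adj u a ∧ ¬G.Adj v a ∧ a ≠ v
  · obtain ⟨a, hua, hva, hav⟩ := hmove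
    have hva' := adj_compress_of_adj_of_not_adj hua hva hav
    rw [unsignedChromaticCoeff_eq_add hva' i, deleteEdges_compress hua hva hav,
      unsignedChromaticCoeff_eq_add hua i]
    refine add_le_add ((ih hua).1 u v) ?_
    exact (unsignedChromaticCoeff_mono (contract_compress_le hua hva hav) i).trans ((ih hua).2 _ _)
  · push Not at hmove
    rw [compress_eq_self hmove]

theorem numColorings_eq_card_coloring [Fintype V] [DecidableEq V] (G : SimpleGraph V)
    [DecidableRel G.Adj] (k : ℕ) : G.numColorings k = Nat.card (G.Coloring (Fin k)) := by
  rw [numColorings, ← Nat.card_eq_fintype_card]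
  exact Nat.card_congr ⟨fun f => Coloring.mk f.1 (f.2 _ _), fun C => ⟨C, fun _ _ => C.valid⟩,
    fun _ => rfl, fun _ => rfl⟩

end SimpleGraph

theorem compress_chromaticPolynomial_coeff_le_general {V : Type*} [Fintype V] [DecidableEq V]
    (G : SimpleGraph V) [DecidableRel G.Adj] (u v : V)
    (P P' : Polynomial ℤ)
    (hP : ∀ k : ℕ, P.eval (k : ℤ) = G.numColorings k)
    (hP' : ∀ k : ℕ, P'.eval (k : ℤ) = (G.compress u v).numColorings k) :
    ∀ i ≤ Fintype.card V, |P'.coeff i| ≤ |P.coeff i| := by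
  intro i _
  have hχ : G.chromaticPolynomial = P := SimpleGraph.chromaticPolynomial_eq_of_eval fun k => by
    rw [hP, G.numColorings_eq_card_coloring]
  have hχ' : (G.compress u v).chromaticPolynomial = P' :=
    SimpleGraph.chromaticPolynomial_eq_of_eval fun k => by
      rw [hP', (G.compress u v).numColorings_eq_card_coloring]
  rw [← hχ, ← hχ', G.abs_coeff_chromaticPolynomial,
    (G.compress u v).abs_coeff_chromaticPolynomial]
  exact G.unsignedChromaticCoeff_compress_le u v i

/-- Compression does not increase the absolute values of the chromatic coefficients:
if `G'` is the compression of `G` from `u` to `v`, then `|c_i(G')| ≤ |c_i(G)|` for all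
`0 ≤ i ≤ n`. -/
theorem compress_chromaticPolynomial_coeff_le {V : Type*} [Fintype V] [DecidableEq V]
    (G : SimpleGraph V) [DecidableRel G.Adj] (u v : V) (huv : u ≠ v)
    (P P' : Polynomial ℤ)
    (hP : ∀ k : ℕ, P.eval (k : ℤ) = G.numColorings k)
    (hP' : ∀ k : ℕ, P'.eval (k : ℤ) = (G.compress u v).numColorings k) :
    ∀ i ≤ Fintype.card V, |P'.coeff i| ≤ |P.coeff i| :=
  compress_chromaticPolynomial_coeff_le_general G u v P P' hP hP'
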